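/- arXiv:2002.04273 — 3 statements merged into one kernel-verified Lean document; each statement's English description precedes it below -/
import Mathlib

section
/- For all real numbers x and y, |x⁻ - y⁻|^p ≤ |x - y|^(p-2) (x - y) (y⁻ - x⁻), where x⁻ = max(-x, 0) denotes the negative part and p > 1. -/
theorem Antitone.sub_mul_sub_swap_eq_abs_mul_abs {α : Type*} [CommRing α] [LinearOrder α]
    [IsStrictOrderedRing α] {f : α → α} (hf : Antitone f) (x y : α) :
    (x - y) * (f y - f x) = |x - y| * |f x - f y| := by
  rcases le_total x y with h | h
  · rw [abs_of_nonpos (sub_nonpos.2 h), abs_of_nonneg (sub_nonneg.2 (hf h))]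
    ring
  · rw [abs_of_nonneg (sub_nonneg.2 h), abs_of_nonpos (sub_nonpos.2 (hf h))]
    ring

theorem Real.rpow_le_rpow_sub_two_mul_self_mul {s t p : ℝ} (hs : 0 ≤ s) (hst : s ≤ t)
    (hp : 1 < p) : s ^ p ≤ t ^ (p - 2) * t * s :=
  calc s ^ p = s ^ (p - 1) * s := by
        rw [← Real.rpow_add_one' hs (by linarith), sub_add_cancel]
    _ ≤ t ^ (p - 1) * s := by gcongr
    _ = t ^ (p - 2) * t * s := by
        rw [← Real.rpow_add_one' (hs.trans hst) (by linarith)]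
        ring_nf

theorem stmt_0 (p : ℝ) (hp : 1 < p) (x y : ℝ) :
    |max (-x) 0 - max (-y) 0| ^ p ≤
      |x - y| ^ (p - 2) * (x - y) * (max (-y) 0 - max (-x) 0) := by
  have negPart_lipschitz : |max (-x) 0 - max (-y) 0| ≤ |x - y| :=
    (abs_max_sub_max_le_abs _ _ _).trans_eq (by rw [neg_sub_neg, abs_sub_comm])
  have negPart_antitone : Antitone fun t : ℝ => max (-t) 0 :=
    fun _ _ h => max_le_max (neg_le_neg h) le_rfl
  calc |max (-x) 0 - max (-y) 0| ^ p
      ≤ |x - y| ^ (p - 2) * |x - y| * |max (-x) 0 - max (-y) 0| :=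
        Real.rpow_le_rpow_sub_two_mul_self_mul (abs_nonneg _) negPart_lipschitz hp
    _ = |x - y| ^ (p - 2) * (x - y) * (max (-y) 0 - max (-x) 0) := by
        rw [mul_assoc, ← negPart_antitone.sub_mul_sub_swap_eq_abs_mul_abs, mul_assoc]
end

section
/- For all real numbers x and y, |x⁺ - y⁺|^p ≤ |x - y|^(p-2) (x - y) (x⁺ - y⁺), where x⁺ = max(x, 0) denotes the positive part and p > 1. -/
theorem stmt_1 (p : ℝ) (hp : 1 < p) (x y : ℝ) :
    |max x 0 - max y 0| ^ p ≤
      |x - y| ^ (p - 2) * (x - y) * (max x 0 - max y 0) := by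
  set t := max x 0 - max y 0 with ht
  set s := x - y with hs
  have habs : |t| ≤ |s| := abs_max_sub_max_le_abs x y 0
  have hsign : 0 ≤ s * t := by
    rcases le_total x y with h | h
    · have h2 : max x 0 ≤ max y 0 := max_le_max h le_rfl
      exact mul_nonneg_of_nonpos_of_nonpos (sub_nonpos.mpr h) (sub_nonpos.mpr h2)
    · have h2 : max y 0 ≤ max x 0 := max_le_max h le_rfl
      exact mul_nonneg (sub_nonneg.mpr h) (sub_nonneg.mpr h2)
  have hst : s * t = |s| * |t| := by
    rw [← abs_mul, abs_of_nonneg hsign]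
  by_cases hs0 : s = 0
  · have ht0 : t = 0 := by
      have h1 := habs
      rw [hs0, abs_zero] at h1
      exact abs_nonpos_iff.mp h1
    rw [ht0, hs0]
    simp [Real.zero_rpow (by positivity : p ≠ 0)]
  · have hspos : 0 < |s| := abs_pos.mpr hs0
    have hrw : |s| ^ (p - 2) * s * t = |s| ^ (p - 1) * |t| := by
      rw [mul_assoc, hst, ← mul_assoc, ← Real.rpow_add_one (ne_of_gt hspos)]
      ring_nf
    rw [hrw]
    by_cases ht0 : t = 0
    · simp [ht0, Real.zero_rpow (by positivity : p ≠ 0)]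
    · have htpos : 0 < |t| := abs_pos.mpr ht0
      have hkey : |t| ^ p = |t| ^ (p - 1) * |t| := by
        rw [← Real.rpow_add_one (ne_of_gt htpos)]; ring_nf
      rw [hkey]
      exact mul_le_mul_of_nonneg_right
        (Real.rpow_le_rpow (abs_nonneg t) habs (by linarith)) (abs_nonneg t)
end

section
/- Suppose ᾱ : Ω → ℝ is measurable and for almost every x ∈ Ω, limsup_{|t|→∞} g(x,t)/(|t|^(p-2)t) ≤ ᾱ(x), where g is a Carathéodory function satisfying |g(x,t)| ≤ a(x) + b|t|^(p-1). Then for almost every x ∈ Ω, limsup_{|t|→∞} G(x,t)/|t|^p ≤ ᾱ(x)/p, where G(x,t) = ∫₀ᵗ g(x,τ)dτ. -/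
/-!
Since `d/dt (|t|^p / p) = |t|^(p-2) t`, a bound `g t ≤ α' t^(p-1)` for `t ≥ T` integrates to
`G t ≤ C + α' t^p / p`, hence `G t / t^p ≤ α' / p + o(1)`; letting `α' ↓ ᾱ` gives the claim at `+∞`.
The substitution `t ↦ -g (-t)` preserves the quotient `g t / (|t|^(p-2) t)` and turns `G t` into
`G (-t)`, which reduces `-∞` to `+∞`. The growth bound keeps both quotients bounded, so that the
limsups are genuine rather than the junk value `limsup` takes on unbounded functions.
-/
open MeasureTheory Filter intervalIntegral Topology

lemma abs_rpow_sub_two_mul_self (p : ℝ) {t : ℝ} (ht : t ≠ 0) :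
    |(|t| ^ (p - 2) * t)| = |t| ^ (p - 1) := by
  rw [abs_mul, abs_of_nonneg (by positivity), ← Real.rpow_add_one (abs_ne_zero.2 ht)]
  ring_nf

lemma rpow_sub_two_mul_self (p : ℝ) {t : ℝ} (ht : 0 < t) : |t| ^ (p - 2) * t = t ^ (p - 1) := by
  rw [← abs_of_pos (by positivity : 0 < |t| ^ (p - 2) * t), abs_rpow_sub_two_mul_self p ht.ne',
    abs_of_pos ht]

section Growth

variable {p A B : ℝ} {f : ℝ → ℝ}

lemma abs_le_mul_rpow_of_growth (hp : 1 ≤ p) (hgrowth : ∀ t, |f t| ≤ A + B * |t| ^ (p - 1))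
    {s τ : ℝ} (hs : 1 ≤ s) (hτ : |τ| ≤ s) : |f τ| ≤ (|A| + |B|) * s ^ (p - 1) := by
  have hs1 : 1 ≤ s ^ (p - 1) := Real.one_le_rpow hs (by linarith)
  have hτs : |τ| ^ (p - 1) ≤ s ^ (p - 1) := Real.rpow_le_rpow (abs_nonneg τ) hτ (by linarith)
  calc |f τ| ≤ A + B * |τ| ^ (p - 1) := hgrowth τ
    _ ≤ |A| * s ^ (p - 1) + |B| * s ^ (p - 1) := by
      refine add_le_add ((le_abs_self A).trans (le_mul_of_one_le_right (abs_nonneg A) hs1)) ?_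
      exact (mul_le_mul_of_nonneg_right (le_abs_self B) (by positivity)).trans
        (mul_le_mul_of_nonneg_left hτs (abs_nonneg B))
    _ = (|A| + |B|) * s ^ (p - 1) := by ring

lemma abs_div_rpow_sub_two_mul_self_le (hp : 1 ≤ p)
    (hgrowth : ∀ t, |f t| ≤ A + B * |t| ^ (p - 1)) {t : ℝ} (ht : 1 ≤ |t|) :
    |f t / (|t| ^ (p - 2) * t)| ≤ |A| + |B| := by
  have ht0 : t ≠ 0 := abs_pos.1 (by linarith)
  rw [abs_div, abs_rpow_sub_two_mul_self p ht0, div_le_iff₀ (by positivity)]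
  exact abs_le_mul_rpow_of_growth hp hgrowth ht le_rfl

lemma abs_integral_div_rpow_le (hp : 1 ≤ p)
    (hgrowth : ∀ t, |f t| ≤ A + B * |t| ^ (p - 1)) {t : ℝ} (ht : 1 ≤ |t|) :
    |(∫ τ in (0 : ℝ)..t, f τ) / |t| ^ p| ≤ |A| + |B| := by
  have ht0 : 0 < |t| := by linarith
  have hbound : ∀ τ ∈ Set.uIoc 0 t, ‖f τ‖ ≤ (|A| + |B|) * |t| ^ (p - 1) := fun τ hτ =>
    abs_le_mul_rpow_of_growth hp hgrowth ht
      (by simpa using Set.abs_sub_left_of_mem_uIcc (Set.uIoc_subset_uIcc hτ))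
  have hint := norm_integral_le_of_norm_le_const hbound
  rw [sub_zero, mul_assoc, ← Real.rpow_add_one ht0.ne', sub_add_cancel] at hint
  rw [abs_div, abs_of_pos (Real.rpow_pos_of_pos ht0 p), div_le_iff₀ (by positivity)]
  exact hint

end Growth

section Tail

variable {p α c : ℝ} {f : ℝ → ℝ}

lemma integral_le_add_rpow_of_le_rpow (hp : 0 < p) (hf : Continuous f) {T t : ℝ}
    (hle : ∀ τ, T ≤ τ → f τ ≤ α * τ ^ (p - 1)) (ht : T ≤ t) :
    ∫ τ in (0 : ℝ)..t, f τ ≤ (∫ τ in (0 : ℝ)..T, f τ) - α / p * T ^ p + α / p * t ^ p := by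
  have hpow : IntervalIntegrable (fun τ => α * τ ^ (p - 1)) volume T t :=
    (intervalIntegrable_rpow' (by linarith)).const_mul α
  have htail : ∫ τ in T..t, f τ ≤ ∫ τ in T..t, α * τ ^ (p - 1) :=
    integral_mono_on ht (hf.intervalIntegrable _ _) hpow fun τ hτ => hle τ hτ.1
  rw [intervalIntegral.integral_const_mul, integral_rpow (Or.inl (by linarith)),
    sub_add_cancel] at htail
  rw [← integral_add_adjacent_intervals (hf.intervalIntegrable 0 T) (hf.intervalIntegrable T t)]
  linarith [show α * ((t ^ p - T ^ p) / p) = α / p * t ^ p - α / p * T ^ p by ring]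

lemma eventually_integral_div_rpow_lt_atTop (hp : 0 < p) (hf : Continuous f)
    (h : ∀ᶠ t in atTop, f t / (|t| ^ (p - 2) * t) ≤ α) (hc : α / p < c) :
    ∀ᶠ t in atTop, (∫ τ in (0 : ℝ)..t, f τ) / |t| ^ p < c := by
  obtain ⟨T, hT⟩ := eventually_atTop.1 (h.and (eventually_gt_atTop 0))
  have hT0 : 0 < T := (hT T le_rfl).2
  have hle : ∀ τ, T ≤ τ → f τ ≤ α * τ ^ (p - 1) := fun τ hτ => by
    have ⟨hq, hτ0⟩ := hT τ hτ
    rwa [rpow_sub_two_mul_self p hτ0, div_le_iff₀ (by positivity)] at hq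
  set C := (∫ τ in (0 : ℝ)..T, f τ) - α / p * T ^ p
  have hlim : Tendsto (fun t : ℝ => C / t ^ p + α / p) atTop (𝓝 (α / p)) := by
    simpa using (tendsto_const_nhds.div_atTop (tendsto_rpow_atTop hp)).add_const (α / p)
  filter_upwards [eventually_ge_atTop T, hlim.eventually_lt_const hc] with t hTt hlt
  have htp : 0 < t ^ p := Real.rpow_pos_of_pos (hT0.trans_le hTt) p
  calc (∫ τ in (0 : ℝ)..t, f τ) / |t| ^ p
      ≤ (C + α / p * t ^ p) / t ^ p := by
        rw [abs_of_pos (hT0.trans_le hTt)]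
        exact div_le_div_of_nonneg_right (integral_le_add_rpow_of_le_rpow hp hf hle hTt) htp.le
    _ = C / t ^ p + α / p := by field_simp
    _ < c := hlt

lemma eventually_integral_div_rpow_lt_atBot (hp : 0 < p) (hf : Continuous f)
    (h : ∀ᶠ t in atBot, f t / (|t| ^ (p - 2) * t) ≤ α) (hc : α / p < c) :
    ∀ᶠ t in atBot, (∫ τ in (0 : ℝ)..t, f τ) / |t| ^ p < c := by
  have hrefl : ∀ᶠ t in atTop, -f (-t) / (|t| ^ (p - 2) * t) ≤ α := by
    filter_upwards [tendsto_neg_atTop_atBot.eventually h] with t ht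
    rwa [abs_neg, mul_neg, div_neg, ← neg_div] at ht
  filter_upwards [tendsto_neg_atBot_atTop.eventually
    (eventually_integral_div_rpow_lt_atTop (f := fun t => -f (-t)) hp
      (hf.comp continuous_neg).neg hrefl hc)] with t ht
  rwa [intervalIntegral.integral_neg, integral_comp_neg, neg_zero, integral_symm, neg_neg, neg_neg,
    abs_neg] at ht

end Tail

lemma limsup_integral_div_rpow_le {p A B α : ℝ} {f : ℝ → ℝ} (hp : 1 < p) (hf : Continuous f)
    (hgrowth : ∀ t, |f t| ≤ A + B * |t| ^ (p - 1))
    (h : limsup (fun t => f t / (|t| ^ (p - 2) * t)) (atBot ⊔ atTop) ≤ α) :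
    limsup (fun t => (∫ τ in (0 : ℝ)..t, f τ) / |t| ^ p) (atBot ⊔ atTop) ≤ α / p := by
  have hp0 : 0 < p := by linarith
  have hlarge : ∀ᶠ t : ℝ in atBot ⊔ atTop, 1 ≤ |t| := by
    rw [← comap_abs_atTop]
    exact (eventually_ge_atTop 1).comap abs
  have hbdd : IsBoundedUnder (· ≤ ·) (atBot ⊔ atTop) fun t => f t / (|t| ^ (p - 2) * t) :=
    isBoundedUnder_of_eventually_le (hlarge.mono fun t ht =>
      (le_abs_self _).trans (abs_div_rpow_sub_two_mul_self_le hp.le hgrowth ht))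
  have hcobdd : IsCoboundedUnder (· ≤ ·) (atBot ⊔ atTop)
      fun t => (∫ τ in (0 : ℝ)..t, f τ) / |t| ^ p :=
    isCoboundedUnder_le_of_eventually_le _ (hlarge.mono fun t ht =>
      neg_le_of_abs_le (abs_integral_div_rpow_le hp.le hgrowth ht))
  refine le_of_forall_gt_imp_ge_of_dense fun c hc => ?_
  obtain ⟨α', hαα', hα'c⟩ := exists_between (show α < c * p from (div_lt_iff₀ hp0).1 hc)
  have hα'p : α' / p < c := (div_lt_iff₀ hp0).2 hα'c
  obtain ⟨hbot, htop⟩ := eventually_sup.1 (eventually_lt_of_limsup_lt (h.trans_lt hαα') hbdd)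
  refine limsup_le_of_le hcobdd (eventually_sup.2 ⟨?_, ?_⟩)
  · exact (eventually_integral_div_rpow_lt_atBot hp0 hf (hbot.mono fun _ => le_of_lt) hα'p).mono
      fun _ => le_of_lt
  · exact (eventually_integral_div_rpow_lt_atTop hp0 hf (htop.mono fun _ => le_of_lt) hα'p).mono
      fun _ => le_of_lt

theorem stmt_9_general (N : ℕ) (Ω : Set (Fin N → ℝ))
    (hΩmeas : MeasurableSet Ω)
    (p b : ℝ) (hp : 1 < p)
    (g : (Fin N → ℝ) → ℝ → ℝ) (a ᾱ : (Fin N → ℝ) → ℝ)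
    (hcont : ∀ x ∈ Ω, Continuous (g x))
    (hgrowth : ∀ x ∈ Ω, ∀ t : ℝ, |g x t| ≤ a x + b * |t| ^ (p - 1))
    (hlim : ∀ᵐ x ∂(volume.restrict Ω),
      limsup (fun t : ℝ => g x t / (|t| ^ (p - 2) * t)) (atBot ⊔ atTop) ≤ ᾱ x) :
    ∀ᵐ x ∂(volume.restrict Ω),
      limsup (fun t : ℝ => (∫ τ in (0 : ℝ)..t, g x τ) / |t| ^ p) (atBot ⊔ atTop) ≤
        ᾱ x / p := by
  filter_upwards [hlim, ae_restrict_mem hΩmeas] with x hx hxΩ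
  exact limsup_integral_div_rpow_le hp (hcont x hxΩ) (hgrowth x hxΩ) hx

theorem stmt_9 (N : ℕ) (Ω : Set (Fin N → ℝ)) (hΩbd : Bornology.IsBounded Ω)
    (hΩmeas : MeasurableSet Ω)
    (p b : ℝ) (hp : 1 < p)
    (g : (Fin N → ℝ) → ℝ → ℝ) (a ᾱ : (Fin N → ℝ) → ℝ)
    (hmeasα : Measurable ᾱ)
    (hmeas : ∀ t : ℝ, Measurable fun x => g x t)
    (hcont : ∀ x ∈ Ω, Continuous (g x))
    (hgrowth : ∀ x ∈ Ω, ∀ t : ℝ, |g x t| ≤ a x + b * |t| ^ (p - 1))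
    (hlim : ∀ᵐ x ∂(volume.restrict Ω),
      limsup (fun t : ℝ => g x t / (|t| ^ (p - 2) * t)) (atBot ⊔ atTop) ≤ ᾱ x) :
    ∀ᵐ x ∂(volume.restrict Ω),
      limsup (fun t : ℝ => (∫ τ in (0 : ℝ)..t, g x τ) / |t| ^ p) (atBot ⊔ atTop) ≤
        ᾱ x / p :=
  stmt_9_general N Ω hΩmeas p b hp g a ᾱ hcont hgrowth hlim
end
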